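/- arXiv:1710.09080 — 5 statements merged into one kernel-verified Lean document; each statement's English description precedes it below -/
import Mathlib

section
/- Let V and W be real vector spaces, let h : V → V → W be a symmetric ℝ-bilinear map, let φ : V →ₗ[ℝ] V be a linear map, η : V →ₗ[ℝ] ℝ a linear functional and ξ ∈ V, such that φ ξ = 0, φ (φ X) = −X + η X • ξ for every X ∈ V, and h X ξ = 0 for every X ∈ V. Let β, a ∈ ℝ with a² + β² ≠ 0. If β • h Y (φ X) = a • h X Y for all X, Y ∈ V, then h = 0. -/
/-- Pointwise algebraic content of Theorem 3.1: the reduced Chaki-pseudo parallel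
relation `β • h Y (φ X) = a • h X Y`, with `a² + β² ≠ 0`, forces `h = 0`. -/
theorem stmt1 {V W : Type*} [AddCommGroup V] [Module ℝ V] [AddCommGroup W] [Module ℝ W]
    (h : V →ₗ[ℝ] V →ₗ[ℝ] W) (hsymm : ∀ X Y : V, h X Y = h Y X)
    (φ : V →ₗ[ℝ] V) (η : V →ₗ[ℝ] ℝ) (ξ : V)
    (hφξ : φ ξ = 0) (hφφ : ∀ X : V, φ (φ X) = -X + η X • ξ)
    (hhξ : ∀ X : V, h X ξ = 0)
    (β a : ℝ) (haβ : a ^ 2 + β ^ 2 ≠ 0)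
    (hyp : ∀ X Y : V, β • h Y (φ X) = a • h X Y) :
    h = 0 := by
  have key : ∀ X Y : V, (a ^ 2 + β ^ 2) • h X Y = 0 := by
    intro X Y
    have h1 := hyp (φ X) Y
    have h2 : h Y (φ (φ X)) = - h X Y := by
      simp [hφφ X, hsymm X Y, hsymm ξ Y, hhξ]
    have h3 : β • (β • h Y (φ (φ X))) = β • (a • h (φ X) Y) := by rw [h1]
    rw [h2, hsymm (φ X) Y, smul_comm β a, hyp X Y] at h3
    have : -(β * β) • h X Y = (a * a) • h X Y := by
      simpa [smul_smul, neg_smul] using h3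
    have : ((a * a) + (β * β)) • h X Y = 0 := by
      rw [add_smul, ← this]; simp
    simpa [pow_two] using this
  ext X Y
  have := key X Y
  have h0 : h X Y = 0 := by
    rcases smul_eq_zero.mp this with hc | hz
    · exact absurd hc haβ
    · exact hz
  simpa using h0
end

section
/- Let V and W be real vector spaces, let h : V → V → W be a symmetric ℝ-bilinear map, let φ : V →ₗ[ℝ] V be a linear map, η : V →ₗ[ℝ] ℝ a linear functional and ξ ∈ V, such that φ ξ = 0, φ (φ X) = −X + η X • ξ for every X ∈ V, and h X ξ = 0 for every X ∈ V. Let a ∈ ℝ. If h Y (φ X) = a • h X Y for all X, Y ∈ V, then h = 0 (no condition on a is needed, since a² + 1 ≠ 0 automatically). -/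
/-- Pointwise algebraic content of Corollary 3.2 (Sasakian case `β = 1`):
the relation `h Y (φ X) = a • h X Y` forces `h = 0`, with no condition on `a`. -/
theorem stmt2 {V W : Type*} [AddCommGroup V] [Module ℝ V] [AddCommGroup W] [Module ℝ W]
    (h : V →ₗ[ℝ] V →ₗ[ℝ] W) (hsymm : ∀ X Y : V, h X Y = h Y X)
    (φ : V →ₗ[ℝ] V) (η : V →ₗ[ℝ] ℝ) (ξ : V)
    (hφξ : φ ξ = 0) (hφφ : ∀ X : V, φ (φ X) = -X + η X • ξ)
    (hhξ : ∀ X : V, h X ξ = 0)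
    (a : ℝ)
    (hyp : ∀ X Y : V, h Y (φ X) = a • h X Y) :
    h = 0 := by
  ext X Y
  have key : h Y (φ (φ X)) = a • (a • h X Y) := by
    rw [hyp (φ X) Y, hsymm (φ X) Y, hyp X Y]
  rw [hφφ X] at key
  simp only [map_add, map_neg, map_smul, hhξ Y, smul_zero, add_zero, smul_smul] at key
  have : (a * a + 1) • h X Y = 0 := by
    rw [hsymm Y X] at key
    rw [add_smul, one_smul, ← key]
    simp
  have hne : a * a + 1 ≠ 0 := by nlinarith [sq_nonneg a]
  have := smul_eq_zero.mp this
  simp only [LinearMap.zero_apply]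
  tauto
end

section
/- Let V and W be real vector spaces, let h : V → V → W be a symmetric ℝ-bilinear map, let φ : V →ₗ[ℝ] V be a linear map, η : V →ₗ[ℝ] ℝ a linear functional and ξ ∈ V, such that φ ξ = 0, η ξ = 1, φ (φ X) = −X + η X • ξ for every X ∈ V, and h X ξ = 0 for every X ∈ V. Let dβ : V →ₗ[ℝ] ℝ be a linear functional with dβ ξ = 0, and let b, L ∈ ℝ with L + b² ≠ 0. If for all Y, Z ∈ V one has h Z ( (dβ Y) • φ ξ − (dβ ξ) • φ Y + b² • ((η Y) • ξ − (η ξ) • Y) ) = L • h Y Z, then h = 0. -/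
/-- Pointwise algebraic content of Theorem 3.2: the reduced Deszcz-pseudo parallel
relation `h Z (R(ξ,Y)ξ) = L • h Y Z`, with `L + b² ≠ 0`, forces `h = 0`. -/
theorem stmt3 {V W : Type*} [AddCommGroup V] [Module ℝ V] [AddCommGroup W] [Module ℝ W]
    (h : V →ₗ[ℝ] V →ₗ[ℝ] W) (hsymm : ∀ X Y : V, h X Y = h Y X)
    (φ : V →ₗ[ℝ] V) (η : V →ₗ[ℝ] ℝ) (ξ : V)
    (hφξ : φ ξ = 0) (hηξ : η ξ = 1)
    (hφφ : ∀ X : V, φ (φ X) = -X + η X • ξ)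
    (hhξ : ∀ X : V, h X ξ = 0)
    (dβ : V →ₗ[ℝ] ℝ) (hdβξ : dβ ξ = 0)
    (b L : ℝ) (hLb : L + b ^ 2 ≠ 0)
    (hyp : ∀ Y Z : V,
      h Z ((dβ Y) • φ ξ - (dβ ξ) • φ Y + b ^ 2 • ((η Y) • ξ - (η ξ) • Y)) = L • h Y Z) :
    h = 0 := by
  ext Y Z
  have H := hyp Y Z
  rw [hφξ, hdβξ, hηξ] at H
  simp only [smul_zero, zero_smul, sub_zero, zero_sub, one_smul, smul_sub, map_sub, map_smul,
    map_neg, map_add] at H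
  rw [hhξ Z] at H
  have H2 : (L + b^2) • (h Y Z) = 0 := by
    rw [hsymm Z Y] at H
    simp only [map_zero, zero_add, smul_zero, zero_sub] at H
    rw [add_smul, ← H]; abel
  simpa [hLb] using (smul_eq_zero.mp H2)
end

section
/- Let V and W be real vector spaces, let h : V → V → W be a symmetric ℝ-bilinear map, let φ : V →ₗ[ℝ] V be a linear map, η : V →ₗ[ℝ] ℝ a linear functional and ξ ∈ V, such that φ ξ = 0, φ (φ X) = −X + η X • ξ for every X ∈ V, and h X ξ = 0 for every X ∈ V. Let β, a ∈ ℝ with (a + 1)² + β² ≠ 0. If β • h Y (φ X) = (a + 1) • h X Y for all X, Y ∈ V, then h = 0. -/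
/-- Pointwise algebraic content of Theorem 3.5: the reduced Chaki-pseudo parallel
relation with respect to the semisymmetric metric connection,
`β • h Y (φ X) = (a + 1) • h X Y`, with `(a+1)² + β² ≠ 0`, forces `h = 0`. -/
theorem stmt4 {V W : Type*} [AddCommGroup V] [Module ℝ V] [AddCommGroup W] [Module ℝ W]
    (h : V →ₗ[ℝ] V →ₗ[ℝ] W) (hsymm : ∀ X Y : V, h X Y = h Y X)
    (φ : V →ₗ[ℝ] V) (η : V →ₗ[ℝ] ℝ) (ξ : V)
    (hφξ : φ ξ = 0) (hφφ : ∀ X : V, φ (φ X) = -X + η X • ξ)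
    (hhξ : ∀ X : V, h X ξ = 0)
    (β a : ℝ) (haβ : (a + 1) ^ 2 + β ^ 2 ≠ 0)
    (hyp : ∀ X Y : V, β • h Y (φ X) = (a + 1) • h X Y) :
    h = 0 := by
  ext X Y
  have h1 : (a + 1) • h Y (φ X) = -β • h Y X := by
    have := hyp (φ X) Y
    rw [hφφ X] at this
    simp only [map_add, map_neg, map_smul, hhξ Y, smul_zero, add_zero, smul_neg] at this
    rw [hsymm (φ X) Y] at this
    rw [neg_smul]; exact this.symm
  have h2 : ((a + 1) ^ 2 + β ^ 2) • h X Y = 0 := by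
    have e1 := hyp X Y
    calc ((a + 1) ^ 2 + β ^ 2) • h X Y
        = (a + 1) • ((a + 1) • h X Y) + β • (β • h X Y) := by module
      _ = (a + 1) • (β • h Y (φ X)) + β • (β • h X Y) := by rw [e1]
      _ = β • ((a + 1) • h Y (φ X)) + β • (β • h X Y) := by module
      _ = β • (-β • h Y X) + β • (β • h X Y) := by rw [h1]
      _ = 0 := by rw [hsymm Y X]; module
  simpa [haβ] using smul_eq_zero.mp h2
end

section
/- Let V and W be real vector spaces, let h : V → V → W be an ℝ-bilinear map, let φ : V →ₗ[ℝ] V be a linear map, η : V →ₗ[ℝ] ℝ a linear functional and ξ ∈ V, such that φ (φ X) = −X + η X • ξ for every X ∈ V and h X ξ = 0 for every X ∈ V. Let b, L ∈ ℝ with (L + b²)² + b² ≠ 0. If (L + b²) • h Z Y + b • h Z (φ Y) = 0 for all Y, Z ∈ V, then h = 0. -/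
/-- Pointwise algebraic content of Theorem 3.6: the reduced Deszcz-pseudo parallel
relation with respect to the semisymmetric metric connection,
`(L + b²) • h Z Y + b • h Z (φ Y) = 0`, with `(L + b²)² + b² ≠ 0`, forces `h = 0`. -/
theorem stmt5 {V W : Type*} [AddCommGroup V] [Module ℝ V] [AddCommGroup W] [Module ℝ W]
    (h : V →ₗ[ℝ] V →ₗ[ℝ] W)
    (φ : V →ₗ[ℝ] V) (η : V →ₗ[ℝ] ℝ) (ξ : V)
    (hφφ : ∀ X : V, φ (φ X) = -X + η X • ξ)
    (hhξ : ∀ X : V, h X ξ = 0)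
    (b L : ℝ) (hLb : (L + b ^ 2) ^ 2 + b ^ 2 ≠ 0)
    (hyp : ∀ Y Z : V, (L + b ^ 2) • h Z Y + b • h Z (φ Y) = 0) :
    h = 0 := by
  ext Z Y
  have h1 := hyp Y Z
  have h2 := hyp (φ Y) Z
  have h3 : h Z (φ (φ Y)) = - h Z Y := by
    rw [hφφ, map_add, map_neg, map_smul, hhξ, smul_zero, add_zero]
  rw [h3] at h2
  -- from h2: (L+b²) • h Z (φ Y) = b • h Z Y
  have key : ((L + b ^ 2) ^ 2 + b ^ 2) • h Z Y = 0 := by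
    have := congrArg (fun w => (L + b ^ 2) • w) h1
    simp only [smul_add, smul_smul, smul_zero] at this
    have h2' : (L + b ^ 2) • h Z (φ Y) = b • h Z Y := by
      have := congrArg (fun w => w + b • h Z Y) h2
      simpa [smul_neg, add_assoc] using this
    have h4 : ((L + b ^ 2) * b) • h Z (φ Y) = (b * b) • h Z Y := by
      rw [mul_comm, mul_smul, h2', smul_smul]
    rw [h4, ← add_smul] at this
    convert this using 2
    ring
  have := smul_eq_zero.mp key
  rcases this with h0 | h0
  · exact absurd h0 hLb
  · simpa using h0
end
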